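/- arXiv:1805.02438 — 2 statements merged into one kernel-verified Lean document; each statement's English description precedes it below -/
import Mathlib

section
/- Let P ∈ F2[x,y] be a polynomial lying in the F2-subalgebra generated by the two elements x·y and x² + y. Write c(i,j) ∈ F2 for the coefficient of x^i y^j in P. Then for all natural numbers r and m, c(2r+2m, 2r) = Σ_{n=0}^{r} C(m+n-1, 2n) · c(2r-2n, 2r+m+n), where C(a,b) is taken mod 2 with the convention C(a,b) = 0 for b > a, and the term n = 0 when m = 0 uses C(-1, 0) := 1. -/
open MvPolynomial

section AdemAux
open Finset

-- four Lucas lemmas mod 2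
lemma lucas_ee (x y : ℕ) : ((Nat.choose (2*x) (2*y) : ℕ) : ZMod 2) = (Nat.choose x y : ZMod 2) := by
  have h := @Choose.choose_modEq_choose_mod_mul_choose_div_nat (2*x) (2*y) 2 ⟨Nat.prime_two⟩
  have := (ZMod.natCast_eq_natCast_iff _ _ _).mpr h
  simpa [Nat.mul_div_cancel_left, Nat.mul_mod_right] using this

lemma lucas_oe (x y : ℕ) : ((Nat.choose (2*x+1) (2*y) : ℕ) : ZMod 2) = (Nat.choose x y : ZMod 2) := by
  have h := @Choose.choose_modEq_choose_mod_mul_choose_div_nat (2*x+1) (2*y) 2 ⟨Nat.prime_two⟩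
  have := (ZMod.natCast_eq_natCast_iff _ _ _).mpr h
  simpa [Nat.mul_add_div, Nat.mul_add_mod, Nat.mul_div_cancel_left, Nat.mul_mod_right] using this

lemma lucas_oo (x y : ℕ) : ((Nat.choose (2*x+1) (2*y+1) : ℕ) : ZMod 2) = (Nat.choose x y : ZMod 2) := by
  have h := @Choose.choose_modEq_choose_mod_mul_choose_div_nat (2*x+1) (2*y+1) 2 ⟨Nat.prime_two⟩
  have := (ZMod.natCast_eq_natCast_iff _ _ _).mpr h
  simpa [Nat.mul_add_div, Nat.mul_add_mod] using this

lemma lucas_eo (x y : ℕ) : ((Nat.choose (2*x) (2*y+1) : ℕ) : ZMod 2) = 0 := by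
  have h := @Choose.choose_modEq_choose_mod_mul_choose_div_nat (2*x) (2*y+1) 2 ⟨Nat.prime_two⟩
  have := (ZMod.natCast_eq_natCast_iff _ _ _).mpr h
  simpa [Nat.mul_add_div, Nat.mul_add_mod, Nat.mul_mod_right, Nat.mul_div_cancel_left] using this

/-- `c1 m l = C(m+l-1, 2l)` (Nat-truncated; `c1 0 0 = 1`, matching `C(-1,0)=1`). -/
def c1 (m l : ℕ) : ℕ := (m + l - 1).choose (2*l)

/-- `c2 m l = C(m+l-1, 2l+1)`, with the convention `c2 0 0 = 1` (matching `C(-1,1) ≡ 1 mod 2`). -/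
def c2 (m l : ℕ) : ℕ := if m + l = 0 then 1 else (m + l - 1).choose (2*l + 1)

-- parity reduction lemmas (mod 2)
lemma c1_ee (b j : ℕ) : ((c1 (2*b) (2*j) : ℕ) : ZMod 2) = (c1 b j : ZMod 2) := by
  rcases Nat.eq_zero_or_pos (b + j) with h | h
  · obtain ⟨rfl, rfl⟩ : b = 0 ∧ j = 0 := by omega
    simp [c1]
  · unfold c1
    have h1 : 2*b + 2*j - 1 = 2*(b+j-1)+1 := by omega
    have h2 : 2*(2*j) = 2*(2*j) := rfl
    rw [h1, show (2:ℕ)*(2*j) = 2*(2*j) from rfl, lucas_oe]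

lemma c1_eo (b j : ℕ) : ((c1 (2*b) (2*j+1) : ℕ) : ZMod 2) = (c2 (b+1) j : ZMod 2) := by
  unfold c1 c2
  have h1 : 2*b + (2*j+1) - 1 = 2*(b+j) := by omega
  have h2 : 2*(2*j+1) = 2*(2*j+1) := rfl
  rw [h1, show (2:ℕ)*(2*j+1) = 2*(2*j)+2 from by ring]
  rw [show (2:ℕ)*(2*j)+2 = 2*(2*j+1) from by ring, lucas_ee]
  simp only [if_neg (by omega : ¬ (b+1+j = 0))]
  rw [show b+1+j-1 = b+j from by omega]

lemma c1_oe (b j : ℕ) : ((c1 (2*b+1) (2*j) : ℕ) : ZMod 2) = (c1 (b+1) j : ZMod 2) := by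
  unfold c1
  have h1 : 2*b+1 + 2*j - 1 = 2*(b+j) := by omega
  rw [h1, lucas_ee]
  congr 2
  omega

lemma c1_oo (b j : ℕ) : ((c1 (2*b+1) (2*j+1) : ℕ) : ZMod 2) = (c2 (b+1) j : ZMod 2) := by
  unfold c1 c2
  have h1 : 2*b+1 + (2*j+1) - 1 = 2*(b+j)+1 := by omega
  rw [h1, show (2:ℕ)*(2*j+1) = 2*(2*j+1) from by ring, lucas_oe]
  simp only [if_neg (by omega : ¬ (b+1+j = 0))]
  congr 2
  omega

lemma c2_ee (b j : ℕ) : ((c2 (2*b) (2*j) : ℕ) : ZMod 2) = (c1 b j : ZMod 2) := by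
  rcases Nat.eq_zero_or_pos (b + j) with h | h
  · obtain ⟨rfl, rfl⟩ : b = 0 ∧ j = 0 := by omega
    simp [c1, c2]
  · unfold c1 c2
    simp only [if_neg (by omega : ¬ (2*b+2*j = 0))]
    have h1 : 2*b + 2*j - 1 = 2*(b+j-1)+1 := by omega
    rw [h1, lucas_oo]

lemma c2_eo (b j : ℕ) : ((c2 (2*b) (2*j+1) : ℕ) : ZMod 2) = 0 := by
  unfold c2
  simp only [if_neg (by omega : ¬ (2*b+(2*j+1) = 0))]
  have h1 : 2*b + (2*j+1) - 1 = 2*(b+j) := by omega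
  rw [h1, show (2:ℕ)*(2*j+1)+1 = 2*(2*j+1)+1 from by ring, lucas_eo]

lemma c2_oe (b j : ℕ) : ((c2 (2*b+1) (2*j) : ℕ) : ZMod 2) = 0 := by
  unfold c2
  simp only [if_neg (by omega : ¬ (2*b+1+2*j = 0))]
  have h1 : 2*b+1 + 2*j - 1 = 2*(b+j) := by omega
  rw [h1, show (2:ℕ)*(2*j)+1 = 2*(2*j)+1 from rfl, lucas_eo]

lemma c2_oo (b j : ℕ) : ((c2 (2*b+1) (2*j+1) : ℕ) : ZMod 2) = (c2 (b+1) j : ZMod 2) := by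
  unfold c2
  simp only [if_neg (by omega : ¬ (2*b+1+(2*j+1) = 0)), if_neg (by omega : ¬ (b+1+j = 0))]
  have h1 : 2*b+1 + (2*j+1) - 1 = 2*(b+j)+1 := by omega
  rw [h1, show (2:ℕ)*(2*j+1)+1 = 2*(2*j+1)+1 from by ring, lucas_oo]
  rw [show b+1+j-1 = b+j from by omega]

-- Pascal lemmas
lemma c2_pascal (b j : ℕ) : ((c2 (b+1) j : ℕ) : ZMod 2) = (c1 b j : ZMod 2) + (c2 b j : ZMod 2) := by
  rcases Nat.eq_zero_or_pos (b + j) with h | h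
  · obtain ⟨rfl, rfl⟩ : b = 0 ∧ j = 0 := by omega
    simp [c1, c2]
    decide
  · unfold c1 c2
    simp only [if_neg (by omega : ¬ (b+1+j = 0)), if_neg (by omega : ¬ (b+j = 0))]
    have h1 : b + 1 + j - 1 = (b + j - 1) + 1 := by omega
    rw [h1, show 2*j+1 = (2*j)+1 from rfl, Nat.choose_succ_succ (b+j-1) (2*j)]
    push_cast
    ring

lemma c1_pascal (b j : ℕ) :
    ((c1 (b+1) (j+1) : ℕ) : ZMod 2) = (c1 b (j+1) : ZMod 2) + (c2 (b+1) j : ZMod 2) := by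
  unfold c1 c2
  simp only [if_neg (by omega : ¬ (b+1+j = 0))]
  have h1 : b + 1 + (j+1) - 1 = (b + j) + 1 := by omega
  have h2 : 2*(j+1) = (2*j+1)+1 := by ring
  rw [h1, h2, Nat.choose_succ_succ (b+j) (2*j+1)]
  have h3 : b + (j+1) - 1 = b + j := by omega
  have h4 : b + 1 + j - 1 = b + j := by omega
  rw [h3, h4]
  push_cast
  have hs : (1+j*2).succ = 2+j*2 := by omega
  ring_nf
  rw [hs]

lemma sum_range_even_add_odd (t : ℕ) (f : ℕ → ZMod 2) :
    ∑ l ∈ Finset.range (2*t), f l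
      = ∑ j ∈ Finset.range t, f (2*j) + ∑ j ∈ Finset.range t, f (2*j+1) := by
  induction t with
  | zero => simp
  | succ t ih =>
    rw [show 2*(t+1) = (2*t+1)+1 from by ring, Finset.sum_range_succ, Finset.sum_range_succ,
      ih, Finset.sum_range_succ, Finset.sum_range_succ]
    ring

lemma sum_split_even (a : ℕ) (f : ℕ → ZMod 2) :
    ∑ l ∈ Finset.range (2*a+1), f l
      = ∑ j ∈ Finset.range (a+1), f (2*j) + ∑ j ∈ Finset.range a, f (2*j+1) := by
  rw [Finset.sum_range_succ, sum_range_even_add_odd, Finset.sum_range_succ]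
  ring

lemma sum_split_odd (a : ℕ) (f : ℕ → ZMod 2) :
    ∑ l ∈ Finset.range (2*a+1+1), f l
      = ∑ j ∈ Finset.range (a+1), f (2*j) + ∑ j ∈ Finset.range (a+1), f (2*j+1) := by
  rw [show 2*a+1+1 = 2*(a+1) from by ring, sum_range_even_add_odd]

lemma char2_cancel (x y : ZMod 2) : x + y + y = x := by
  rw [add_assoc, CharTwo.add_self_eq_zero, add_zero]

theorem key : ∀ (v s m : ℕ), 2*s+m ≤ v →
    (∑ l ∈ Finset.range (s+1), (c1 m l : ZMod 2) * (((3*s+m).choose (s-l) : ℕ) : ZMod 2)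
        = (((3*s+m).choose (s+m) : ℕ) : ZMod 2)) ∧
    (∑ l ∈ Finset.range (s+1), (c2 m l : ZMod 2) * (((3*s+m+1).choose (s-l) : ℕ) : ZMod 2)
        = (((3*s+m+1).choose (s+m) : ℕ) : ZMod 2)) := by
  intro v
  induction v with
  | zero =>
    intro s m h
    obtain ⟨rfl, rfl⟩ : s = 0 ∧ m = 0 := by omega
    constructor <;> simp [c1, c2]
  | succ v ih =>
    intro s m h
    rcases Nat.lt_or_ge (2*s+m) (v+1) with hlt | hge
    · exact ih s m (by omega)
    have hv : 2*s+m = v+1 := by omega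
    rcases Nat.even_or_odd s with hse | hso
    · obtain ⟨a, rfl⟩ : ∃ a, s = 2*a := ⟨s/2, by rcases hse with ⟨c, hc⟩; omega⟩
      rcases Nat.even_or_odd m with hme | hmo
      · obtain ⟨b, rfl⟩ : ∃ b, m = 2*b := ⟨m/2, by rcases hme with ⟨c, hc⟩; omega⟩
        have hab : 2*a+b ≤ v := by omega
        constructor
        · -- I1 (2a, 2b)
          rw [sum_split_even]
          have he : ∀ j ∈ Finset.range (a+1),
              (c1 (2*b) (2*j) : ZMod 2) * (((3*(2*a)+2*b).choose (2*a - 2*j) : ℕ) : ZMod 2)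
              = (c1 b j : ZMod 2) * (((3*a+b).choose (a - j) : ℕ) : ZMod 2) := by
            intro j hj
            rw [Finset.mem_range] at hj
            rw [show 3*(2*a)+2*b = 2*(3*a+b) from by ring,
              show 2*a - 2*j = 2*(a-j) from by omega, lucas_ee, c1_ee]
          have ho : ∀ j ∈ Finset.range a,
              (c1 (2*b) (2*j+1) : ZMod 2) * (((3*(2*a)+2*b).choose (2*a - (2*j+1)) : ℕ) : ZMod 2)
              = 0 := by
            intro j hj
            rw [Finset.mem_range] at hj
            rw [show 3*(2*a)+2*b = 2*(3*a+b) from by ring,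
              show 2*a - (2*j+1) = 2*(a-j-1)+1 from by omega, lucas_eo, mul_zero]
          rw [Finset.sum_congr rfl he, Finset.sum_congr rfl ho, Finset.sum_const_zero, add_zero,
            show 2*a+2*b = 2*(a+b) from by ring, show 3*(2*a)+2*b = 2*(3*a+b) from by ring,
            lucas_ee]
          exact (ih a b hab).1
        · -- I2 (2a, 2b)
          rw [sum_split_even]
          have he : ∀ j ∈ Finset.range (a+1),
              (c2 (2*b) (2*j) : ZMod 2) * (((3*(2*a)+2*b+1).choose (2*a - 2*j) : ℕ) : ZMod 2)
              = (c1 b j : ZMod 2) * (((3*a+b).choose (a - j) : ℕ) : ZMod 2) := by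
            intro j hj
            rw [Finset.mem_range] at hj
            rw [show 3*(2*a)+2*b+1 = 2*(3*a+b)+1 from by ring,
              show 2*a - 2*j = 2*(a-j) from by omega, lucas_oe, c2_ee]
          have ho : ∀ j ∈ Finset.range a,
              (c2 (2*b) (2*j+1) : ZMod 2) * (((3*(2*a)+2*b+1).choose (2*a - (2*j+1)) : ℕ) : ZMod 2)
              = 0 := by
            intro j hj
            rw [c2_eo, zero_mul]
          rw [Finset.sum_congr rfl he, Finset.sum_congr rfl ho, Finset.sum_const_zero, add_zero,
            show 2*a+2*b = 2*(a+b) from by ring, show 3*(2*a)+2*b+1 = 2*(3*a+b)+1 from by ring,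
            lucas_oe]
          exact (ih a b hab).1
      · obtain ⟨b, rfl⟩ : ∃ b, m = 2*b+1 := ⟨m/2, by rcases hmo with ⟨c, hc⟩; omega⟩
        have hab : 2*a+b ≤ v := by omega
        constructor
        · -- I1 (2a, 2b+1)
          rw [sum_split_even]
          have he : ∀ j ∈ Finset.range (a+1),
              (c1 (2*b+1) (2*j) : ZMod 2) * (((3*(2*a)+(2*b+1)).choose (2*a - 2*j) : ℕ) : ZMod 2)
              = (c1 (b+1) j : ZMod 2) * (((3*a+b).choose (a - j) : ℕ) : ZMod 2) := by
            intro j hj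
            rw [Finset.mem_range] at hj
            rw [show 3*(2*a)+(2*b+1) = 2*(3*a+b)+1 from by ring,
              show 2*a - 2*j = 2*(a-j) from by omega, lucas_oe, c1_oe]
          have ho : ∀ j ∈ Finset.range a,
              (c1 (2*b+1) (2*j+1) : ZMod 2)
                * (((3*(2*a)+(2*b+1)).choose (2*a - (2*j+1)) : ℕ) : ZMod 2)
              = (c2 (b+1) j : ZMod 2) * (((3*a+b).choose (a - (j+1)) : ℕ) : ZMod 2) := by
            intro j hj
            rw [Finset.mem_range] at hj
            rw [show 3*(2*a)+(2*b+1) = 2*(3*a+b)+1 from by ring,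
              show 2*a - (2*j+1) = 2*(a-(j+1))+1 from by omega, lucas_oo, c1_oo]
          rw [Finset.sum_congr rfl he, Finset.sum_congr rfl ho]
          have heven : ∑ j ∈ Finset.range (a+1),
                (c1 (b+1) j : ZMod 2) * (((3*a+b).choose (a - j) : ℕ) : ZMod 2)
              = ∑ j ∈ Finset.range (a+1),
                  (c1 b j : ZMod 2) * (((3*a+b).choose (a - j) : ℕ) : ZMod 2)
                + ∑ j ∈ Finset.range a,
                  (c2 (b+1) j : ZMod 2) * (((3*a+b).choose (a - (j+1)) : ℕ) : ZMod 2) := by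
            rw [Finset.sum_range_succ' (fun j => (c1 (b+1) j : ZMod 2)
                  * (((3*a+b).choose (a - j) : ℕ) : ZMod 2)) a,
              Finset.sum_range_succ' (fun j => (c1 b j : ZMod 2)
                  * (((3*a+b).choose (a - j) : ℕ) : ZMod 2)) a]
            have hp : ∀ j ∈ Finset.range a,
                (c1 (b+1) (j+1) : ZMod 2) * (((3*a+b).choose (a - (j+1)) : ℕ) : ZMod 2)
                = (c1 b (j+1) : ZMod 2) * (((3*a+b).choose (a - (j+1)) : ℕ) : ZMod 2)
                  + (c2 (b+1) j : ZMod 2) * (((3*a+b).choose (a - (j+1)) : ℕ) : ZMod 2) := by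
              intro j hj
              rw [c1_pascal, add_mul]
            rw [Finset.sum_congr rfl hp, Finset.sum_add_distrib]
            have h0 : (c1 (b+1) 0 : ZMod 2) = (c1 b 0 : ZMod 2) := by
              simp [c1]
            rw [h0]
            ring
          rw [heven, add_assoc, CharTwo.add_self_eq_zero, add_zero,
            show 2*a+(2*b+1) = 2*(a+b)+1 from by ring,
            show 3*(2*a)+(2*b+1) = 2*(3*a+b)+1 from by ring, lucas_oo]
          exact (ih a b hab).1
        · -- I2 (2a, 2b+1) : both sides vanish
          rw [sum_split_even]
          have he : ∀ j ∈ Finset.range (a+1),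
              (c2 (2*b+1) (2*j) : ZMod 2)
                * (((3*(2*a)+(2*b+1)+1).choose (2*a - 2*j) : ℕ) : ZMod 2) = 0 := by
            intro j hj
            rw [c2_oe, zero_mul]
          have ho : ∀ j ∈ Finset.range a,
              (c2 (2*b+1) (2*j+1) : ZMod 2)
                * (((3*(2*a)+(2*b+1)+1).choose (2*a - (2*j+1)) : ℕ) : ZMod 2) = 0 := by
            intro j hj
            rw [Finset.mem_range] at hj
            rw [show 3*(2*a)+(2*b+1)+1 = 2*(3*a+b+1) from by ring,
              show 2*a - (2*j+1) = 2*(a-j-1)+1 from by omega, lucas_eo, mul_zero]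
          rw [Finset.sum_congr rfl he, Finset.sum_congr rfl ho]
          simp only [Finset.sum_const_zero, add_zero, zero_add]
          rw [show 2*a+(2*b+1) = 2*(a+b)+1 from by ring,
            show 3*(2*a)+(2*b+1)+1 = 2*(3*a+b+1) from by ring, lucas_eo]
    · obtain ⟨a, rfl⟩ : ∃ a, s = 2*a+1 := ⟨s/2, by rcases hso with ⟨c, hc⟩; omega⟩
      rcases Nat.even_or_odd m with hme | hmo
      · obtain ⟨b, rfl⟩ : ∃ b, m = 2*b := ⟨m/2, by rcases hme with ⟨c, hc⟩; omega⟩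
        have hab : 2*a+b ≤ v := by omega
        constructor
        · -- I1 (2a+1, 2b)
          rw [sum_split_odd]
          have he : ∀ j ∈ Finset.range (a+1),
              (c1 (2*b) (2*j) : ZMod 2)
                * (((3*(2*a+1)+2*b).choose (2*a+1 - 2*j) : ℕ) : ZMod 2)
              = (c1 b j : ZMod 2) * (((3*a+b+1).choose (a - j) : ℕ) : ZMod 2) := by
            intro j hj
            rw [Finset.mem_range] at hj
            rw [show 3*(2*a+1)+2*b = 2*(3*a+b+1)+1 from by ring,
              show 2*a+1 - 2*j = 2*(a-j)+1 from by omega, lucas_oo, c1_ee]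
          have ho : ∀ j ∈ Finset.range (a+1),
              (c1 (2*b) (2*j+1) : ZMod 2)
                * (((3*(2*a+1)+2*b).choose (2*a+1 - (2*j+1)) : ℕ) : ZMod 2)
              = (c2 (b+1) j : ZMod 2) * (((3*a+b+1).choose (a - j) : ℕ) : ZMod 2) := by
            intro j hj
            rw [Finset.mem_range] at hj
            rw [show 3*(2*a+1)+2*b = 2*(3*a+b+1)+1 from by ring,
              show 2*a+1 - (2*j+1) = 2*(a-j) from by omega, lucas_oe, c1_eo]
          rw [Finset.sum_congr rfl he, Finset.sum_congr rfl ho]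
          have hp : ∀ j ∈ Finset.range (a+1),
              (c2 (b+1) j : ZMod 2) * (((3*a+b+1).choose (a - j) : ℕ) : ZMod 2)
              = (c1 b j : ZMod 2) * (((3*a+b+1).choose (a - j) : ℕ) : ZMod 2)
                + (c2 b j : ZMod 2) * (((3*a+b+1).choose (a - j) : ℕ) : ZMod 2) := by
            intro j hj
            rw [c2_pascal, add_mul]
          rw [Finset.sum_congr rfl hp, Finset.sum_add_distrib, ← add_assoc,
            CharTwo.add_self_eq_zero, zero_add,
            show 2*a+1+2*b = 2*(a+b)+1 from by ring,
            show 3*(2*a+1)+2*b = 2*(3*a+b+1)+1 from by ring, lucas_oo]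
          exact (ih a b hab).2
        · -- I2 (2a+1, 2b) : both sides vanish
          rw [sum_split_odd]
          have he : ∀ j ∈ Finset.range (a+1),
              (c2 (2*b) (2*j) : ZMod 2)
                * (((3*(2*a+1)+2*b+1).choose (2*a+1 - 2*j) : ℕ) : ZMod 2) = 0 := by
            intro j hj
            rw [Finset.mem_range] at hj
            rw [show 3*(2*a+1)+2*b+1 = 2*(3*a+b+2) from by ring,
              show 2*a+1 - 2*j = 2*(a-j)+1 from by omega, lucas_eo, mul_zero]
          have ho : ∀ j ∈ Finset.range (a+1),
              (c2 (2*b) (2*j+1) : ZMod 2)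
                * (((3*(2*a+1)+2*b+1).choose (2*a+1 - (2*j+1)) : ℕ) : ZMod 2) = 0 := by
            intro j hj
            rw [c2_eo, zero_mul]
          rw [Finset.sum_congr rfl he, Finset.sum_congr rfl ho]
          simp only [Finset.sum_const_zero, add_zero, zero_add]
          rw [show 2*a+1+2*b = 2*(a+b)+1 from by ring,
            show 3*(2*a+1)+2*b+1 = 2*(3*a+b+2) from by ring, lucas_eo]
      · obtain ⟨b, rfl⟩ : ∃ b, m = 2*b+1 := ⟨m/2, by rcases hmo with ⟨c, hc⟩; omega⟩
        have hab : 2*a+(b+1) ≤ v := by omega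
        constructor
        · -- I1 (2a+1, 2b+1)
          rw [sum_split_odd]
          have he : ∀ j ∈ Finset.range (a+1),
              (c1 (2*b+1) (2*j) : ZMod 2)
                * (((3*(2*a+1)+(2*b+1)).choose (2*a+1 - 2*j) : ℕ) : ZMod 2) = 0 := by
            intro j hj
            rw [Finset.mem_range] at hj
            rw [show 3*(2*a+1)+(2*b+1) = 2*(3*a+(b+1)+1) from by ring,
              show 2*a+1 - 2*j = 2*(a-j)+1 from by omega, lucas_eo, mul_zero]
          have ho : ∀ j ∈ Finset.range (a+1),
              (c1 (2*b+1) (2*j+1) : ZMod 2)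
                * (((3*(2*a+1)+(2*b+1)).choose (2*a+1 - (2*j+1)) : ℕ) : ZMod 2)
              = (c2 (b+1) j : ZMod 2) * (((3*a+(b+1)+1).choose (a - j) : ℕ) : ZMod 2) := by
            intro j hj
            rw [Finset.mem_range] at hj
            rw [show 3*(2*a+1)+(2*b+1) = 2*(3*a+(b+1)+1) from by ring,
              show 2*a+1 - (2*j+1) = 2*(a-j) from by omega, lucas_ee, c1_oo]
          rw [Finset.sum_congr rfl he, Finset.sum_congr rfl ho, Finset.sum_const_zero, zero_add,
            show 2*a+1+(2*b+1) = 2*(a+(b+1)) from by ring,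
            show 3*(2*a+1)+(2*b+1) = 2*(3*a+(b+1)+1) from by ring, lucas_ee]
          exact (ih a (b+1) hab).2
        · -- I2 (2a+1, 2b+1)
          rw [sum_split_odd]
          have he : ∀ j ∈ Finset.range (a+1),
              (c2 (2*b+1) (2*j) : ZMod 2)
                * (((3*(2*a+1)+(2*b+1)+1).choose (2*a+1 - 2*j) : ℕ) : ZMod 2) = 0 := by
            intro j hj
            rw [c2_oe, zero_mul]
          have ho : ∀ j ∈ Finset.range (a+1),
              (c2 (2*b+1) (2*j+1) : ZMod 2)
                * (((3*(2*a+1)+(2*b+1)+1).choose (2*a+1 - (2*j+1)) : ℕ) : ZMod 2)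
              = (c2 (b+1) j : ZMod 2) * (((3*a+(b+1)+1).choose (a - j) : ℕ) : ZMod 2) := by
            intro j hj
            rw [Finset.mem_range] at hj
            rw [show 3*(2*a+1)+(2*b+1)+1 = 2*(3*a+(b+1)+1)+1 from by ring,
              show 2*a+1 - (2*j+1) = 2*(a-j) from by omega, lucas_oe, c2_oo]
          rw [Finset.sum_congr rfl he, Finset.sum_congr rfl ho, Finset.sum_const_zero, zero_add,
            show 2*a+1+(2*b+1) = 2*(a+(b+1)) from by ring,
            show 3*(2*a+1)+(2*b+1)+1 = 2*(3*a+(b+1)+1)+1 from by ring, lucas_oe]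
          exact (ih a (b+1) hab).2


lemma d_eq_iff (i j i' j' : ℕ) :
    (Finsupp.single (0 : Fin 2) i + Finsupp.single 1 j
      = Finsupp.single (0 : Fin 2) i' + Finsupp.single 1 j') ↔ (i = i' ∧ j = j') := by
  constructor
  · intro h
    have h0 := congrArg (fun f => f 0) h
    have h1 := congrArg (fun f => f 1) h
    simp only [Finsupp.add_apply, Finsupp.single_eq_same, Finsupp.single_apply] at h0 h1
    norm_num at h0 h1
    exact ⟨h0, h1⟩
  · rintro ⟨rfl, rfl⟩; rfl

lemma X_pow_mul_X_pow (p q : ℕ) :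
    (X 0 : MvPolynomial (Fin 2) (ZMod 2)) ^ p * X 1 ^ q
      = monomial (Finsupp.single 0 p + Finsupp.single 1 q) 1 := by
  rw [X_pow_eq_monomial, X_pow_eq_monomial, monomial_mul, one_mul]

lemma coeffQ (a b i j : ℕ) :
    MvPolynomial.coeff (Finsupp.single 0 i + Finsupp.single 1 j)
      (((X 0 * X 1) ^ a * (X 0 ^ 2 + X 1) ^ b : MvPolynomial (Fin 2) (ZMod 2)))
    = ∑ k ∈ Finset.range (b+1), ((b.choose k : ℕ) : ZMod 2)
        * (if a + 2*k = i ∧ a + (b - k) = j then 1 else 0) := by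
  rw [add_pow, Finset.mul_sum, MvPolynomial.coeff_sum]
  refine Finset.sum_congr rfl (fun k hk => ?_)
  rw [Finset.mem_range] at hk
  have hterm : (X 0 * X 1 : MvPolynomial (Fin 2) (ZMod 2)) ^ a
        * ((X 0 ^ 2) ^ k * X 1 ^ (b - k) * ((b.choose k : ℕ) : MvPolynomial (Fin 2) (ZMod 2)))
      = C ((b.choose k : ℕ) : ZMod 2) * (X 0 ^ (a + 2*k) * X 1 ^ (a + (b - k))) := by
    rw [show (C ((b.choose k : ℕ) : ZMod 2) : MvPolynomial (Fin 2) (ZMod 2))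
        = ((b.choose k : ℕ) : MvPolynomial (Fin 2) (ZMod 2)) from by norm_cast]
    ring
  rw [hterm, coeff_C_mul, X_pow_mul_X_pow, coeff_monomial,
    if_congr (d_eq_iff (a + 2*k) (a + (b - k)) i j) rfl rfl]

theorem good_monomial (a b r m : ℕ) :
    MvPolynomial.coeff (Finsupp.single 0 (2*r+2*m) + Finsupp.single 1 (2*r))
      (((X 0 * X 1) ^ a * (X 0 ^ 2 + X 1) ^ b : MvPolynomial (Fin 2) (ZMod 2)))
    = ∑ n ∈ Finset.range (r + 1),
        ((m + n - 1).choose (2 * n) : ZMod 2) *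
          MvPolynomial.coeff (Finsupp.single 0 (2*r - 2*n) + Finsupp.single 1 (2*r+m+n))
            (((X 0 * X 1) ^ a * (X 0 ^ 2 + X 1) ^ b : MvPolynomial (Fin 2) (ZMod 2))) := by
  simp only [coeffQ]
  have hzero : ∀ (P : Prop) (_ : ¬ P), True → True := fun _ _ _ => trivial
  rcases Nat.even_or_odd a with ⟨a', rfl⟩ | ⟨a', rfl⟩
  swap
  · -- a odd : both sides vanish
    refine Eq.trans (Finset.sum_eq_zero ?_) (Eq.symm (Finset.sum_eq_zero ?_))
    · intro k hk
      rw [Finset.mem_range] at hk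
      rw [if_neg (by omega), mul_zero]
    · intro n hn
      rw [Finset.mem_range] at hn
      rw [Finset.sum_eq_zero (fun k hk => by
        rw [Finset.mem_range] at hk
        rw [if_neg (by omega), mul_zero]), mul_zero]
  · by_cases hE : 3*a' + b = 3*r + m
    · by_cases har : a' ≤ r
      · obtain ⟨s, rfl⟩ : ∃ s, r = a' + s := ⟨r - a', by omega⟩
        obtain rfl : b = 3*s + m := by omega
        rw [Finset.sum_eq_single (s+m)
            (fun k hk hne => by rw [Finset.mem_range] at hk; rw [if_neg (by omega), mul_zero])
            (fun h => absurd (Finset.mem_range.mpr (by omega)) h),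
          if_pos (by omega), mul_one]
        have hinner : ∀ n ∈ Finset.range (a'+s+1),
            (((m + n - 1).choose (2 * n) : ℕ) : ZMod 2) *
              (∑ k ∈ Finset.range (3*s+m+1), (((3*s+m).choose k : ℕ) : ZMod 2)
                * (if a'+a' + 2*k = 2*(a'+s) - 2*n ∧ a'+a' + (3*s+m - k) = 2*(a'+s)+m+n
                    then 1 else 0))
            = (((m + n - 1).choose (2 * n) : ℕ) : ZMod 2) *
              (if n ≤ s then (((3*s+m).choose (s-n) : ℕ) : ZMod 2) else 0) := by
          intro n hn
          rw [Finset.mem_range] at hn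
          congr 1
          by_cases hns : n ≤ s
          · rw [if_pos hns,
              Finset.sum_eq_single (s-n)
                (fun k hk hne => by rw [Finset.mem_range] at hk; rw [if_neg (by omega), mul_zero])
                (fun h => absurd (Finset.mem_range.mpr (by omega)) h),
              if_pos (by omega), mul_one]
          · rw [if_neg hns, Finset.sum_eq_zero]
            intro k hk
            rw [Finset.mem_range] at hk
            rw [if_neg (by omega), mul_zero]
        rw [Finset.sum_congr rfl hinner,
          ← Finset.sum_subset (Finset.range_subset_range.mpr (by omega : s+1 ≤ a'+s+1))
            (fun n _ hn => by
              rw [Finset.mem_range, not_lt] at hn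
              rw [if_neg (by omega), mul_zero]),
          ← (key (2*s+m) s m le_rfl).1]
        refine Finset.sum_congr rfl (fun n hn => ?_)
        rw [Finset.mem_range] at hn
        rw [if_pos (show n ≤ s by omega),
          show (((m + n - 1).choose (2 * n) : ℕ) : ZMod 2) = ((c1 m n : ℕ) : ZMod 2) from rfl]
      · refine Eq.trans (Finset.sum_eq_zero ?_) (Eq.symm (Finset.sum_eq_zero ?_))
        · intro k hk
          rw [Finset.mem_range] at hk
          rw [if_neg (by omega), mul_zero]
        · intro n hn
          rw [Finset.mem_range] at hn
          rw [Finset.sum_eq_zero (fun k hk => by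
            rw [Finset.mem_range] at hk
            rw [if_neg (by omega), mul_zero]), mul_zero]
    · refine Eq.trans (Finset.sum_eq_zero ?_) (Eq.symm (Finset.sum_eq_zero ?_))
      · intro k hk
        rw [Finset.mem_range] at hk
        rw [if_neg (by omega), mul_zero]
      · intro n hn
        rw [Finset.mem_range] at hn
        rw [Finset.sum_eq_zero (fun k hk => by
          rw [Finset.mem_range] at hk
          rw [if_neg (by omega), mul_zero]), mul_zero]

end AdemAux

/-- If `P ∈ F₂[x,y]` lies in the subalgebra generated by `xy` and `x² + y`, and `c i j`
denotes the coefficient of `x^i y^j` in `P`, then for all `r, m`: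
`c(2r+2m, 2r) = Σ_{n=0}^{r} C(m+n-1, 2n) · c(2r-2n, 2r+m+n)` (binomials mod 2, truncated
natural subtraction giving the convention `C(-1,0) := C(0,0) = 1` when `m = n = 0`). -/
theorem coeff_relation_of_mem_adjoin (P : MvPolynomial (Fin 2) (ZMod 2))
    (hP : P ∈ Algebra.adjoin (ZMod 2)
      ({X 0 * X 1, X 0 ^ 2 + X 1} : Set (MvPolynomial (Fin 2) (ZMod 2))))
    (c : ℕ → ℕ → ZMod 2)
    (hc : ∀ i j : ℕ, c i j = MvPolynomial.coeff (Finsupp.single 0 i + Finsupp.single 1 j) P)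
    (r m : ℕ) :
    c (2 * r + 2 * m) (2 * r) =
      ∑ n ∈ Finset.range (r + 1),
        ((m + n - 1).choose (2 * n) : ZMod 2) * c (2 * r - 2 * n) (2 * r + m + n) := by
  simp only [hc]
  have hspan : P ∈ Submodule.span (ZMod 2)
      (Submonoid.closure ({X 0 * X 1, X 0 ^ 2 + X 1} :
        Set (MvPolynomial (Fin 2) (ZMod 2))) : Set (MvPolynomial (Fin 2) (ZMod 2))) := by
    rw [← Algebra.adjoin_eq_span]
    exact hP
  clear hc hP
  induction hspan using Submodule.span_induction with
  | mem Q hQ =>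
    obtain ⟨a, b, rfl⟩ := (Submonoid.mem_closure_pair _ _ _).mp hQ
    exact good_monomial a b r m
  | zero => simp
  | add x y hx hy ihx ihy =>
    simp only [MvPolynomial.coeff_add, ihx, ihy, mul_add, Finset.sum_add_distrib]
  | smul a x hx ihx =>
    simp only [MvPolynomial.coeff_smul, ihx, smul_eq_mul, Finset.mul_sum]
    exact Finset.sum_congr rfl (fun n _ => by ring)
end

section
/- Fix a natural number n ≥ 1 and define l : ℕ × ℕ → ℤ/2 recursively by l(0,0) = 1, l(0,j) = 0 for j > 0, and l(i+1, j) = l(i, j) + l(i, j-1) + ε(i,j), where ε(i,j) = C(i, n-i) mod 2 if j = n - i (and 0 ≤ n - i), and ε(i,j) = 0 otherwise (here l(i,-1) := 0). Then for all i, j with j ≤ i, l(i,j) = C(i,j) + Σ_{k=0}^{⌊n/2⌋+1} C(n-k, k) · C(i-(n+1-k), j-k) (mod 2), where a binomial coefficient C(a,b) is interpreted as 0 whenever a < 0 or b < 0 or b > a. -/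
/-- The recursion encoding the quantum Cartan relation for `ℂP^n`: with
`l 0 0 = 1`, `l 0 j = 0` for `j > 0`, and
`l (i+1) j = l i j + l i (j-1) + ε i j` where `ε i j = C(i, n-i)` if `i ≤ n` and
`j = n - i`, else `0` (and `l i (-1) := 0`), we have for all `j ≤ i`:
`l i j = C(i,j) + Σ_{k=0}^{⌊n/2⌋+1} C(n-k, k) · C(i-(n+1-k), j-k)` in `ℤ/2`,
where a binomial vanishes whenever a (signed) entry is negative. -/
theorem quantum_cartan_recursion_closed_form (n : ℕ) (hn : 1 ≤ n)
    (l : ℕ → ℕ → ZMod 2)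
    (h00 : l 0 0 = 1) (h0j : ∀ j : ℕ, 0 < j → l 0 j = 0)
    (hrec : ∀ i j : ℕ, l (i + 1) j =
      l i j + (if j = 0 then 0 else l i (j - 1)) +
        (if i ≤ n ∧ j = n - i then (i.choose (n - i) : ZMod 2) else 0)) :
    ∀ i j : ℕ, j ≤ i →
      l i j = (i.choose j : ZMod 2) +
        ∑ k ∈ Finset.range (n / 2 + 2),
          (if n + 1 - k ≤ i ∧ k ≤ j then
            (((n - k).choose k) * ((i - (n + 1 - k)).choose (j - k)) : ZMod 2) else 0) := by
  suffices H : ∀ i j : ℕ, l i j = (i.choose j : ZMod 2) +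
      ∑ k ∈ Finset.range (n / 2 + 2),
        (if n + 1 - k ≤ i ∧ k ≤ j then
          (((n - k).choose k) * ((i - (n + 1 - k)).choose (j - k)) : ZMod 2) else 0) by
    exact fun i j _ => H i j
  intro i
  induction i with
  | zero =>
    intro j
    have hz : (∑ k ∈ Finset.range (n / 2 + 2),
        (if n + 1 - k ≤ 0 ∧ k ≤ j then
          (((n - k).choose k) * ((0 - (n + 1 - k)).choose (j - k)) : ZMod 2) else 0)) = 0 := by
      refine Finset.sum_eq_zero fun k hk => if_neg ?_
      rw [Finset.mem_range] at hk
      omega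
    rw [hz]
    cases j with
    | zero => simpa using h00
    | succ m =>
      rw [h0j (m + 1) (Nat.succ_pos m), Nat.choose_eq_zero_of_lt (Nat.succ_pos m)]
      simp
  | succ i ih =>
    intro j
    cases j with
    | zero =>
      have sum0 : ∀ m : ℕ, (∑ k ∈ Finset.range (n / 2 + 2),
          (if n + 1 - k ≤ m ∧ k ≤ 0 then
            (((n - k).choose k) * ((m - (n + 1 - k)).choose (0 - k)) : ZMod 2) else 0)) =
          (if n + 1 ≤ m then 1 else 0) := by
        intro m
        rw [Finset.sum_eq_single_of_mem 0 (Finset.mem_range.mpr (by omega))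
          (fun b _ hb => if_neg (by omega))]
        by_cases h : n + 1 ≤ m
        · rw [if_pos ⟨by omega, le_refl 0⟩, if_pos h]
          simp
        · rw [if_neg (by omega), if_neg h]
      rw [hrec i 0, ih 0, sum0 i, sum0 (i + 1)]
      have heps : (if i ≤ n ∧ (0 : ℕ) = n - i then (i.choose (n - i) : ZMod 2) else 0) =
          (if i = n then 1 else 0) := by
        by_cases h : i = n
        · rw [if_pos ⟨by omega, by omega⟩, if_pos h]
          have e : n - i = 0 := by omega
          rw [e, Nat.choose_zero_right, Nat.cast_one]
        · rw [if_neg (by omega), if_neg h]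
      rw [heps]
      simp only [Nat.choose_zero_right, Nat.cast_one, if_true]
      split_ifs <;> first | omega | decide
    | succ m =>
      rw [hrec i (m + 1), if_neg (show ¬(m + 1 = 0) by omega)]
      rw [show m + 1 - 1 = m from rfl, ih (m + 1), ih m]
      have hterm : ∀ k ∈ Finset.range (n / 2 + 2),
          (if n + 1 - k ≤ i + 1 ∧ k ≤ m + 1 then
            (((n - k).choose k) * ((i + 1 - (n + 1 - k)).choose (m + 1 - k)) : ZMod 2) else 0) =
          (if n + 1 - k ≤ i ∧ k ≤ m + 1 then
            (((n - k).choose k) * ((i - (n + 1 - k)).choose (m + 1 - k)) : ZMod 2) else 0) +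
          (if n + 1 - k ≤ i ∧ k ≤ m then
            (((n - k).choose k) * ((i - (n + 1 - k)).choose (m - k)) : ZMod 2) else 0) +
          (if i + k = n ∧ k = m + 1 then (((n - k).choose k : ℕ) : ZMod 2) else 0) := by
        intro k _
        by_cases h1 : n + 1 ≤ i + k
        · by_cases h2 : k ≤ m
          · have e1 : i + 1 - (n + 1 - k) = (i - (n + 1 - k)) + 1 := by omega
            have e2 : m + 1 - k = (m - k) + 1 := by omega
            rw [if_pos (show n + 1 - k ≤ i + 1 ∧ k ≤ m + 1 by omega),
              if_pos (show n + 1 - k ≤ i ∧ k ≤ m + 1 by omega),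
              if_pos (show n + 1 - k ≤ i ∧ k ≤ m by omega),
              if_neg (show ¬(i + k = n ∧ k = m + 1) by omega),
              e1, e2, Nat.choose_succ_succ]
            push_cast
            ring
          · by_cases h3 : k = m + 1
            · have e1 : i + 1 - (n + 1 - k) = (i - (n + 1 - k)) + 1 := by omega
              have e2 : m + 1 - k = 0 := by omega
              rw [if_pos (show n + 1 - k ≤ i + 1 ∧ k ≤ m + 1 by omega),
                if_pos (show n + 1 - k ≤ i ∧ k ≤ m + 1 by omega),
                if_neg (show ¬(n + 1 - k ≤ i ∧ k ≤ m) by omega),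
                if_neg (show ¬(i + k = n ∧ k = m + 1) by omega),
                e1, e2, Nat.choose_zero_right, Nat.choose_zero_right]
              ring
            · rw [if_neg (show ¬(n + 1 - k ≤ i + 1 ∧ k ≤ m + 1) by omega),
                if_neg (show ¬(n + 1 - k ≤ i ∧ k ≤ m + 1) by omega),
                if_neg (show ¬(n + 1 - k ≤ i ∧ k ≤ m) by omega),
                if_neg (show ¬(i + k = n ∧ k = m + 1) by omega)]
              ring
        · by_cases h4 : i + k = n
          · have e0 : i + 1 - (n + 1 - k) = 0 := by omega
            by_cases h3 : k = m + 1
            · have e2 : m + 1 - k = 0 := by omega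
              rw [if_pos (show n + 1 - k ≤ i + 1 ∧ k ≤ m + 1 by omega),
                if_neg (show ¬(n + 1 - k ≤ i ∧ k ≤ m + 1) by omega),
                if_neg (show ¬(n + 1 - k ≤ i ∧ k ≤ m) by omega),
                if_pos (show i + k = n ∧ k = m + 1 from ⟨h4, h3⟩),
                e0, e2, Nat.choose_zero_right]
              push_cast
              ring
            · by_cases h2 : k ≤ m + 1
              · rw [if_pos (show n + 1 - k ≤ i + 1 ∧ k ≤ m + 1 by omega),
                  if_neg (show ¬(n + 1 - k ≤ i ∧ k ≤ m + 1) by omega),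
                  if_neg (show ¬(n + 1 - k ≤ i ∧ k ≤ m) by omega),
                  if_neg (show ¬(i + k = n ∧ k = m + 1) by omega),
                  e0, Nat.choose_eq_zero_of_lt (show 0 < m + 1 - k by omega)]
                push_cast
                ring
              · rw [if_neg (show ¬(n + 1 - k ≤ i + 1 ∧ k ≤ m + 1) by omega),
                  if_neg (show ¬(n + 1 - k ≤ i ∧ k ≤ m + 1) by omega),
                  if_neg (show ¬(n + 1 - k ≤ i ∧ k ≤ m) by omega),
                  if_neg (show ¬(i + k = n ∧ k = m + 1) by omega)]
                ring
          · rw [if_neg (show ¬(n + 1 - k ≤ i + 1 ∧ k ≤ m + 1) by omega),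
              if_neg (show ¬(n + 1 - k ≤ i ∧ k ≤ m + 1) by omega),
              if_neg (show ¬(n + 1 - k ≤ i ∧ k ≤ m) by omega),
              if_neg (show ¬(i + k = n ∧ k = m + 1) by omega)]
            ring
      rw [Finset.sum_congr rfl hterm, Finset.sum_add_distrib, Finset.sum_add_distrib]
      have hdelta : (∑ k ∈ Finset.range (n / 2 + 2),
          (if i + k = n ∧ k = m + 1 then (((n - k).choose k : ℕ) : ZMod 2) else 0)) =
          (if i ≤ n ∧ m + 1 = n - i then (i.choose (n - i) : ZMod 2) else 0) := by
        by_cases h : i + (m + 1) = n ∧ m + 1 < n / 2 + 2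
        · obtain ⟨h4, h5⟩ := h
          rw [Finset.sum_eq_single_of_mem (m + 1) (Finset.mem_range.mpr h5)
            (fun b _ hb => if_neg (by omega)), if_pos ⟨h4, rfl⟩, if_pos ⟨by omega, by omega⟩]
          have e1 : n - (m + 1) = i := by omega
          have e2 : n - i = m + 1 := by omega
          rw [e1, e2]
        · rw [Finset.sum_eq_zero (fun k hk => if_neg (by
            rw [Finset.mem_range] at hk; omega))]
          by_cases h6 : i ≤ n ∧ m + 1 = n - i
          · rw [if_pos h6, Nat.choose_eq_zero_of_lt (by omega), Nat.cast_zero]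
          · rw [if_neg h6]
      rw [hdelta, Nat.choose_succ_succ]
      push_cast
      ring
end
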